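/- Let n ≥ 1 and let B ∈ ℝ^{n×n} be nonsingular and cyclic (minimal polynomial equals characteristic polynomial), with characteristic polynomial splitting over ℝ and every root of the minimal polynomial having multiplicity at most two in the minimal polynomial. Then for any ξ, η ∈ ℝⁿ with det[ξ, Bξ, B²ξ, …, B^{n−1}ξ] ≠ 0 and det[η, Bη, B²η, …, B^{n−1}η] ≠ 0, the state ξ can be steered to the state η in the system x(k+1) = (I + u(k)B)x(k); that is, the system is controllable on the complement of the set {ξ : det[ξ, Bξ, …, B^{n−1}ξ] = 0}. -/

import Mathlib

open Matrix MeasureTheory Polynomial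

/-- The product `(I + u(l-1)B) ⋯ (I + u(1)B)(I + u(0)B)`. -/
noncomputable def prodCtrl {n : ℕ} (B : Matrix (Fin n) (Fin n) ℝ) (l : ℕ) (u : ℕ → ℝ) :
    Matrix (Fin n) (Fin n) ℝ :=
  ((List.range l).reverse.map fun k => (1 : Matrix (Fin n) (Fin n) ℝ) + u k • B).prod

/-- `ξ` can be steered to `η` in the system `x(k+1) = (I + u(k)B) x(k)`. -/
noncomputable def steers {n : ℕ} (B : Matrix (Fin n) (Fin n) ℝ) (ξ η : Fin n → ℝ) : Prop :=
  ∃ l : ℕ, 1 ≤ l ∧ ∃ u : ℕ → ℝ, (prodCtrl B l u).mulVec ξ = η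

/-- Near-controllability: outside two Lebesgue-null sets, any state can be steered to any state. -/
noncomputable def nearlyControllable {n : ℕ} (B : Matrix (Fin n) (Fin n) ℝ) : Prop :=
  ∃ E F : Set (Fin n → ℝ), volume E = 0 ∧ volume F = 0 ∧
    ∀ ξ ∉ E, ∀ η ∉ F, steers B ξ η

/-- The matrix `[ξ, Bξ, B²ξ, …, B^{n-1}ξ]`. -/
noncomputable def ctrlMat {n : ℕ} (B : Matrix (Fin n) (Fin n) ℝ) (ξ : Fin n → ℝ) :
    Matrix (Fin n) (Fin n) ℝ :=
  Matrix.of fun i j => (B ^ (j : ℕ)).mulVec ξ i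

/-- The `N × N` Jordan block with eigenvalue `lam`. -/
def jordanBlock (N : ℕ) (lam : ℝ) : Matrix (Fin N) (Fin N) ℝ :=
  Matrix.of fun i j => if i = j then lam else if (j : ℕ) = (i : ℕ) + 1 then 1 else 0

/-- Block-diagonal Jordan matrix: `r` two-dimensional Jordan blocks with eigenvalues
`lam 0, …, lam (r-1)` followed by `1 × 1` blocks `lam r, …, lam (m-1)` (so `n = m + r`). -/
def pairJordan (n r : ℕ) (lam : ℕ → ℝ) : Matrix (Fin n) (Fin n) ℝ :=
  Matrix.of fun i j =>
    if (i : ℕ) = (j : ℕ) then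
      (if (i : ℕ) < 2 * r then lam ((i : ℕ) / 2) else lam ((i : ℕ) - r))
    else if (j : ℕ) = (i : ℕ) + 1 ∧ (i : ℕ) < 2 * r ∧ (i : ℕ) % 2 = 0 then 1 else 0

/-!
Since `ξ` is a cyclic vector, `η = p(B) ξ` for a polynomial `p`, and `[η, Bη, …] = p(B) [ξ, Bξ, …]`
shows that `p(B)` is invertible, i.e. `p` vanishes at no eigenvalue of `B`. A control sequence
realises exactly the matrices `Q(B)` with `Q = ∏ (1 + u_k X)`, that is, with `Q` having only real
roots and `Q(0) = 1`; so it suffices to find such a `Q ≡ p` modulo the minimal polynomial `m`.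

Take `Q = P + c R` with `P ≡ p (mod m)`, `P(0) = 1`, `deg P ≤ deg m`, and `R = ∏_{ρ ∈ W} (X - ρ)`
for a multiset `W ⊇ {0} + roots m` of multiplicity at most two. For large `c`, `Q` has the sign
of `R` just left and right of each point of `W`, hence changes sign across every simple point;
at a double point `v` it has the same sign on both sides and the value `P(v)` at `v`, giving two
roots when `P(v)` and the cofactor `∏_{ρ ≠ v} (v - ρ)` of `(X - v)²` have opposite signs. Where
they do not, adding the simple points `v ± δ` to `W` flips the sign of the cofactor at `v` only.
Then `Q` has `deg Q` real roots.
-/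

open Filter Topology

lemma mul_neg_of_pos_mul_of_pos_mul {a b c d : ℝ} (hac : 0 < a * c) (hbd : 0 < b * d)
    (hcd : c * d < 0) : a * b < 0 := by
  have : 0 < a * b * (c * d) := by linarith [mul_pos hac hbd]
  exact neg_of_mul_pos_left this hcd.le

lemma add_mul_self_pos_of_abs_lt {a s : ℝ} (h : |s| < |a|) : 0 < (a + s) * a := by
  rcases abs_cases a with ⟨ha, _⟩ | ⟨ha, _⟩ <;> rcases abs_cases s with ⟨hs, _⟩ | ⟨hs, _⟩ <;>
    nlinarith

lemma Multiset.exists_pos_two_mul_lt_abs_sub (W : Multiset ℝ) :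
    ∃ ε > 0, ∀ a ∈ W, ∀ b ∈ W, a ≠ b → 2 * ε < |a - b| := by
  have hlim : Tendsto (fun ε : ℝ => 2 * ε) (𝓝[>] 0) (𝓝 0) := by
    simpa using (tendsto_id.const_mul (2 : ℝ)).mono_left (nhdsWithin_le_nhds (a := 0))
  have : ∀ᶠ ε in 𝓝[>] 0, ∀ a ∈ W.toFinset, ∀ b ∈ W.toFinset, a ≠ b → 2 * ε < |a - b| := by
    refine (eventually_all_finset _).2 fun a _ => (eventually_all_finset _).2 fun b _ => ?_
    by_cases hab : a = b
    · exact Eventually.of_forall fun _ h => absurd hab h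
    · exact (hlim.eventually (eventually_lt_nhds (abs_pos.2 (sub_ne_zero.2 hab)))).mono
        fun _ h _ => h
  obtain ⟨ε, h, hε⟩ := (this.and self_mem_nhdsWithin).exists
  exact ⟨ε, hε, by simpa using h⟩

lemma Multiset.prod_map_sub_mul_prod_map_sub_pos {R : Type*} [CommRing R] [LinearOrder R]
    [IsStrictOrderedRing R] (s : Multiset R) {x y : R}
    (h : ∀ ρ ∈ s, 0 < (x - ρ) * (y - ρ)) :
    0 < (s.map (x - ·)).prod * (s.map (y - ·)).prod := by
  rw [← Multiset.prod_map_mul]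
  exact Multiset.prod_pos fun a ha => by
    obtain ⟨ρ, hρ, rfl⟩ := Multiset.mem_map.mp ha
    exact h ρ hρ

lemma Multiset.eval_prod_X_sub_C {R : Type*} [CommRing R] [DecidableEq R] (W : Multiset R)
    (v y : R) :
    ((W.map fun ρ => X - C ρ).prod).eval y
      = (y - v) ^ W.count v * ((W.filter (· ≠ v)).map (y - ·)).prod := by
  conv_lhs => rw [← W.filter_add_not (· = v)]
  simp [eval_multiset_prod, Multiset.filter_eq']

/-- The value at `v` of the cofactor of `(X - v) ^ (W.count v)` in `∏_{ρ ∈ W} (X - ρ)`. -/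
noncomputable def cofactorAt (W : Multiset ℝ) (v : ℝ) : ℝ :=
  ((W.filter (· ≠ v)).map (v - ·)).prod

lemma cofactorAt_ne_zero (W : Multiset ℝ) (v : ℝ) : cofactorAt W v ≠ 0 :=
  Multiset.prod_ne_zero fun h => by
    obtain ⟨ρ, hρ, hρv⟩ := Multiset.mem_map.mp h
    exact (Multiset.mem_filter.mp hρ).2 (sub_eq_zero.mp hρv).symm

lemma eval_prod_X_sub_C_mul_pos (W : Multiset ℝ) {v s : ℝ} (hs : s ≠ 0)
    (h : ∀ ρ ∈ W, ρ ≠ v → |s| < |v - ρ|) :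
    0 < ((W.map fun ρ => X - C ρ).prod).eval (v + s) * (s ^ W.count v * cofactorAt W v) := by
  rw [W.eval_prod_X_sub_C v, add_sub_cancel_left, cofactorAt,
    show ∀ a b d : ℝ, a * b * (a * d) = a ^ 2 * (b * d) from fun _ _ _ => by ring]
  refine mul_pos (by positivity) (Multiset.prod_map_sub_mul_prod_map_sub_pos _ fun ρ hρ => ?_)
  obtain ⟨hρW, hρv⟩ := Multiset.mem_filter.mp hρ
  rw [show v + s - ρ = v - ρ + s by ring]
  exact add_mul_self_pos_of_abs_lt (h ρ hρW hρv)

lemma Polynomial.eventually_pos_eval_add_C_mul_mul (P R : ℝ[X]) {y z : ℝ}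
    (h : 0 < R.eval y * z) : ∀ᶠ c in atTop, 0 < (P + C c * R).eval y * z := by
  have : Tendsto (fun c => P.eval y * z + c * (R.eval y * z)) atTop atTop :=
    tendsto_atTop_add_const_left _ _ (tendsto_id.atTop_mul_const h)
  filter_upwards [this.eventually_gt_atTop 0] with c hc
  simpa [add_mul, mul_assoc] using hc

lemma Polynomial.exists_isRoot_mem_Ioo_of_mul_neg (Q : ℝ[X]) {a b : ℝ} (hab : a ≤ b)
    (h : Q.eval a * Q.eval b < 0) : ∃ x ∈ Set.Ioo a b, Q.IsRoot x := by
  have hc : ContinuousOn (Q.eval ·) (Set.Icc a b) := Q.continuous.continuousOn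
  rcases mul_neg_iff.mp h with ⟨ha, hb⟩ | ⟨ha, hb⟩
  · exact intermediate_value_Ioo' hab hc ⟨hb, ha⟩
  · exact intermediate_value_Ioo hab hc ⟨ha, hb⟩

lemma Polynomial.exists_finset_isRoot_mem_Ioo (Q : ℝ[X]) {v ε σ : ℝ} (hε : 0 < ε) {k : ℕ}
    (hk : k = 1 ∨ k = 2) (hlo : 0 < Q.eval (v - ε) * ((-ε) ^ k * σ))
    (hhi : 0 < Q.eval (v + ε) * (ε ^ k * σ)) (hmid : k = 2 → Q.eval v * σ < 0) :
    ∃ S : Finset ℝ, S.card = k ∧ ∀ x ∈ S, x ∈ Set.Ioo (v - ε) (v + ε) ∧ Q.IsRoot x := by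
  have hσ : σ ≠ 0 := by rintro rfl; simp at hlo
  have hεσ : 0 < (ε * σ) ^ 2 := by positivity
  rcases hk with rfl | rfl
  · obtain ⟨x, hx, hQx⟩ := Q.exists_isRoot_mem_Ioo_of_mul_neg (by linarith : v - ε ≤ v + ε)
      (mul_neg_of_pos_mul_of_pos_mul hlo hhi (by nlinarith))
    exact ⟨{x}, rfl, by simpa using ⟨hx, hQx⟩⟩
  · have hmid : 0 < Q.eval v * -σ := by linarith [hmid rfl]
    obtain ⟨x, hx, hQx⟩ := Q.exists_isRoot_mem_Ioo_of_mul_neg (by linarith : v - ε ≤ v)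
      (mul_neg_of_pos_mul_of_pos_mul hlo hmid (by nlinarith))
    obtain ⟨y, hy, hQy⟩ := Q.exists_isRoot_mem_Ioo_of_mul_neg (by linarith : v ≤ v + ε)
      (mul_neg_of_pos_mul_of_pos_mul hmid hhi (by nlinarith))
    refine ⟨{x, y}, Finset.card_pair (by linarith [hx.2, hy.1]), ?_⟩
    simp only [Finset.mem_insert, Finset.mem_singleton, forall_eq_or_imp, forall_eq]
    exact ⟨⟨⟨hx.1, by linarith [hx.2]⟩, hQx⟩, ⟨⟨by linarith [hy.1], hy.2⟩, hQy⟩⟩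

lemma Polynomial.splits_of_natDegree_le_card {R : Type*} [CommRing R] [IsDomain R] {Q : R[X]}
    (S : Finset R) (hS : ∀ x ∈ S, Q.IsRoot x) (h : Q.natDegree ≤ S.card) : Q.Splits := by
  classical
  rcases eq_or_ne Q 0 with rfl | hQ
  · exact Splits.zero
  have hsub : S ⊆ Q.roots.toFinset := fun x hx => by simpa [hQ] using hS x hx
  refine splits_iff_card_roots.mpr (le_antisymm (card_roots' Q) ?_)
  exact h.trans ((Finset.card_le_card hsub).trans (Multiset.toFinset_card_le _))

lemma Polynomial.splits_of_forall_exists_finset_isRoot {Q : ℝ[X]} {W : Multiset ℝ} {ε : ℝ}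
    (hQ : Q.natDegree ≤ Multiset.card W) (hsep : ∀ v ∈ W, ∀ w ∈ W, v ≠ w → 2 * ε < |v - w|)
    (h : ∀ v ∈ W, ∃ S : Finset ℝ,
      S.card = W.count v ∧ ∀ x ∈ S, x ∈ Set.Ioo (v - ε) (v + ε) ∧ Q.IsRoot x) :
    Q.Splits := by
  choose! S hScard hS using fun v (hv : v ∈ W.toFinset) => h v (Multiset.mem_toFinset.mp hv)
  refine splits_of_natDegree_le_card (W.toFinset.biUnion S) (fun x hx => ?_) ?_
  · obtain ⟨v, hv, hxv⟩ := Finset.mem_biUnion.mp hx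
    exact (hS v hv x hxv).2
  rw [Finset.card_biUnion, Finset.sum_congr rfl hScard, Multiset.toFinset_sum_count_eq]
  · exact hQ
  intro v hv w hw hvw
  refine Finset.disjoint_left.mpr fun x hxv hxw => ?_
  have h1 := (hS v hv x hxv).1
  have h2 := (hS w hw x hxw).1
  rcases lt_abs.mp (hsep v (by simpa using hv) w (by simpa using hw) hvw) with h | h <;>
    linarith [h1.1, h1.2, h2.1, h2.2]

theorem exists_splits_add_C_mul_prod_X_sub_C (W : Multiset ℝ)
    (hW : ∀ v, W.count v ≤ 2) (P : ℝ[X]) (hP : P.natDegree ≤ Multiset.card W)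
    (hsign : ∀ v, W.count v = 2 → P.eval v * cofactorAt W v < 0) :
    ∃ c : ℝ, (P + C c * (W.map fun ρ => X - C ρ).prod).Splits := by
  set R := (W.map fun ρ => X - C ρ).prod
  obtain ⟨ε, hε, hsep⟩ := W.exists_pos_two_mul_lt_abs_sub
  have hR : ∀ v ∈ W, ∀ s, |s| = ε → 0 < R.eval (v + s) * (s ^ W.count v * cofactorAt W v) :=
    fun v hv s hs => eval_prod_X_sub_C_mul_pos W (by rintro rfl; simp at hs; linarith)
      fun ρ hρ hρv => by linarith [hsep v hv ρ hρ (Ne.symm hρv)]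
  obtain ⟨c, hc⟩ : ∃ c : ℝ, ∀ v ∈ W.toFinset,
      0 < (P + C c * R).eval (v + -ε) * ((-ε) ^ W.count v * cofactorAt W v) ∧
      0 < (P + C c * R).eval (v + ε) * (ε ^ W.count v * cofactorAt W v) :=
    ((eventually_all_finset _).2 fun v hv =>
      (eventually_pos_eval_add_C_mul_mul P R (hR v (by simpa using hv) _ (by simp [hε.le]))).and
        (eventually_pos_eval_add_C_mul_mul P R (hR v (by simpa using hv) _ (by simp [hε.le])))
      ).exists
  refine ⟨c, splits_of_forall_exists_finset_isRoot ?_ hsep fun v hv => ?_⟩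
  · refine (natDegree_add_le _ _).trans (max_le hP ((natDegree_C_mul_le _ _).trans ?_))
    rw [natDegree_multiset_prod_X_sub_C_eq_card]
  obtain ⟨hlo, hhi⟩ := hc v (Multiset.mem_toFinset.mpr hv)
  refine (P + C c * R).exists_finset_isRoot_mem_Ioo hε ?_ (by simpa [sub_eq_add_neg] using hlo)
    hhi fun h2 => ?_
  · have := Multiset.count_pos.mpr hv
    have := hW v
    omega
  · have hRv : R.eval v = 0 := by
      rw [W.eval_prod_X_sub_C v, sub_self, h2]
      simp
    simpa [hRv] using hsign v h2

def pairsAround (s : Finset ℝ) (δ : ℝ) : Multiset ℝ :=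
  s.val.map (· - δ) + s.val.map (· + δ)

lemma count_pairsAround_le_one {s : Finset ℝ} {δ : ℝ} (hδ : 0 < δ)
    (hs : ∀ a ∈ s, ∀ b ∈ s, a ≠ b → 2 * δ < |a - b|) (v : ℝ) :
    (pairsAround s δ).count v ≤ 1 := by
  have h₁ := Multiset.nodup_iff_count_le_one.mp (s.nodup.map (sub_left_injective (b := δ))) v
  have h₂ := Multiset.nodup_iff_count_le_one.mp (s.nodup.map (add_left_injective δ)) v
  rw [pairsAround, Multiset.count_add]
  by_contra! hv
  obtain ⟨a, ha, rfl⟩ := Multiset.mem_map.mp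
    (Multiset.count_pos.mp (by omega : 0 < (s.val.map (· - δ)).count v))
  obtain ⟨b, hb, hab⟩ := Multiset.mem_map.mp
    (Multiset.count_pos.mp (by omega : 0 < (s.val.map (· + δ)).count (a - δ)))
  have := hs a ha b hb (by rintro rfl; linarith)
  rw [show a - b = 2 * δ by linarith, abs_of_pos (by linarith)] at this
  exact lt_irrefl _ this

lemma notMem_pairsAround {s : Finset ℝ} {δ v : ℝ} (hδ : 0 < δ)
    (h : ∀ μ ∈ s, μ ≠ v → δ < |v - μ|) : v ∉ pairsAround s δ := by
  intro hv
  obtain ⟨μ, hμ, t, ht, rfl⟩ : ∃ μ ∈ s, ∃ t, |t| = δ ∧ v = μ + t := by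
    rcases Multiset.mem_add.mp hv with h | h <;> obtain ⟨μ, hμ, rfl⟩ := Multiset.mem_map.mp h
    · exact ⟨μ, hμ, -δ, by simp [hδ.le], by ring⟩
    · exact ⟨μ, hμ, δ, by simp [hδ.le], rfl⟩
  have := h μ hμ fun h => by
    rw [show t = 0 by linarith, abs_zero] at ht
    linarith
  rw [add_sub_cancel_left, ht] at this
  exact lt_irrefl _ this

lemma count_add_pairsAround {W : Multiset ℝ} {s : Finset ℝ} {δ : ℝ} (hδ : 0 < δ)
    (h : ∀ v ∈ W, ∀ μ ∈ s, μ ≠ v → δ < |v - μ|) (v : ℝ) :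
    (W + pairsAround s δ).count v
      = if v ∈ W then W.count v else (pairsAround s δ).count v := by
  rw [Multiset.count_add]
  split_ifs with hv
  · rw [Multiset.count_eq_zero.mpr (notMem_pairsAround hδ (h v hv)), add_zero]
  · rw [Multiset.count_eq_zero.mpr hv, zero_add]

lemma cofactorAt_add_pairsAround (W : Multiset ℝ) {s : Finset ℝ} {δ v : ℝ}
    (hv : v ∉ pairsAround s δ) :
    cofactorAt (W + pairsAround s δ) v
      = cofactorAt W v * ∏ μ ∈ s, (v - (μ - δ)) * (v - (μ + δ)) := by
  have hfilter : (pairsAround s δ).filter (· ≠ v) = pairsAround s δ :=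
    Multiset.filter_eq_self.mpr fun x hx hxv => hv (hxv ▸ hx)
  rw [cofactorAt, cofactorAt, Multiset.filter_add, hfilter, Multiset.map_add, Multiset.prod_add]
  simp only [pairsAround, Multiset.map_add, Multiset.prod_add, Multiset.map_map,
    Finset.prod_eq_multiset_prod, Multiset.prod_map_mul]
  rfl

lemma Finset.prod_sub_sub_mul_sub_add_pos {s : Finset ℝ} {v δ : ℝ} (hδ : 0 ≤ δ)
    (h : ∀ μ ∈ s, δ < |v - μ|) : 0 < ∏ μ ∈ s, (v - (μ - δ)) * (v - (μ + δ)) :=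
  Finset.prod_pos fun μ hμ => by
    have := sq_lt_sq' (by linarith [neg_abs_le (v - μ), h μ hμ]) (h μ hμ)
    nlinarith [sq_abs (v - μ)]

lemma Finset.prod_sub_sub_mul_sub_add_neg {s : Finset ℝ} {v δ : ℝ} (hδ : 0 < δ) (hv : v ∈ s)
    (h : ∀ μ ∈ s, μ ≠ v → δ < |v - μ|) : ∏ μ ∈ s, (v - (μ - δ)) * (v - (μ + δ)) < 0 := by
  rw [← Finset.mul_prod_erase s _ hv]
  refine mul_neg_of_neg_of_pos (by nlinarith) (prod_sub_sub_mul_sub_add_pos hδ.le fun μ hμ => ?_)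
  exact h μ (Finset.mem_of_mem_erase hμ) (Finset.ne_of_mem_erase hμ)

theorem exists_le_mul_cofactorAt_neg (W₀ : Multiset ℝ) (hW₀ : ∀ v, W₀.count v ≤ 2)
    (P : ℝ[X]) (hP : ∀ v, W₀.count v = 2 → P.eval v ≠ 0) :
    ∃ W, W₀ ≤ W ∧ (∀ v, W.count v ≤ 2) ∧ ∀ v, W.count v = 2 → P.eval v * cofactorAt W v < 0 := by
  obtain ⟨δ, hδ, hsep⟩ := W₀.exists_pos_two_mul_lt_abs_sub
  set bad := W₀.toFinset.filter fun v => W₀.count v = 2 ∧ 0 < P.eval v * cofactorAt W₀ v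
  have hbad : ∀ μ ∈ bad, μ ∈ W₀ := fun μ hμ => by simpa using (Finset.mem_filter.mp hμ).1
  have hfar : ∀ v ∈ W₀, ∀ μ ∈ bad, μ ≠ v → δ < |v - μ| := fun v hv μ hμ hμv => by
    linarith [hsep v hv μ (hbad μ hμ) (Ne.symm hμv)]
  have hpairs := count_pairsAround_le_one hδ fun a ha b hb => hsep a (hbad a ha) b (hbad b hb)
  refine ⟨W₀ + pairsAround bad δ, Multiset.le_add_right _ _, fun v => ?_, fun v hv => ?_⟩
  · rw [count_add_pairsAround hδ hfar]
    split_ifs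
    · exact hW₀ v
    · linarith [hpairs v]
  rw [count_add_pairsAround hδ hfar] at hv
  split_ifs at hv with hvW₀
  swap
  · linarith [hpairs v]
  rw [cofactorAt_add_pairsAround _ (notMem_pairsAround hδ (hfar v hvW₀)), ← mul_assoc]
  by_cases hvbad : v ∈ bad
  · exact mul_neg_of_pos_of_neg (Finset.mem_filter.mp hvbad).2.2
      (Finset.prod_sub_sub_mul_sub_add_neg hδ hvbad (hfar v hvW₀))
  · have hPv : P.eval v * cofactorAt W₀ v < 0 := by
      refine lt_of_le_of_ne (not_lt.mp fun h => hvbad ?_)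
        (mul_ne_zero (hP v hv) (cofactorAt_ne_zero W₀ v))
      exact Finset.mem_filter.mpr ⟨by simpa using hvW₀, hv, h⟩
    refine mul_neg_of_neg_of_pos hPv
      (Finset.prod_sub_sub_mul_sub_add_pos hδ.le fun μ hμ => hfar v hvW₀ μ hμ ?_)
    rintro rfl
    exact hvbad hμ

lemma Polynomial.exists_eval_zero_eq_one_dvd_sub {K : Type*} [Field K] {m : K[X]} (hm : m.Monic)
    (hm0 : ¬ m.IsRoot 0) (p : K[X]) :
    ∃ P : K[X], P.eval 0 = 1 ∧ m ∣ P - p ∧ P.natDegree ≤ m.natDegree := by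
  refine ⟨p %ₘ m + C ((1 - (p %ₘ m).eval 0) / m.eval 0) * m, ?_, ?_, ?_⟩
  · have hm0 : m.eval 0 ≠ 0 := hm0
    simp only [eval_add, eval_mul, eval_C]
    field_simp
    ring
  · exact ⟨C ((1 - (p %ₘ m).eval 0) / m.eval 0) - p /ₘ m, by
      linear_combination modByMonic_add_div p m⟩
  · exact (natDegree_add_le _ _).trans
      (max_le (natDegree_modByMonic_le p hm) (natDegree_C_mul_le _ _))

theorem Polynomial.exists_splits_eval_zero_eq_one_dvd_sub {m : ℝ[X]} (hm : m.Monic)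
    (hsplit : m.Splits) (hm0 : ¬ m.IsRoot 0) (hmult : ∀ μ, m.rootMultiplicity μ ≤ 2) (p : ℝ[X])
    (hp : ∀ μ, m.IsRoot μ → ¬ p.IsRoot μ) :
    ∃ Q : ℝ[X], Q.Splits ∧ Q.eval 0 = 1 ∧ m ∣ Q - p := by
  obtain ⟨P, hP0, hPp, hPdeg⟩ := exists_eval_zero_eq_one_dvd_sub hm hm0 p
  have hroots0 : m.roots.count 0 = 0 := by simpa [hm.ne_zero] using hm0
  have hW₀ : ∀ v, (0 ::ₘ m.roots).count v ≤ 2 := by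
    intro v
    rcases eq_or_ne v 0 with rfl | hv
    · simp [hroots0]
    · simpa [Multiset.count_cons_of_ne hv, count_roots] using hmult v
  have hPW₀ : ∀ v, (0 ::ₘ m.roots).count v = 2 → P.eval v ≠ 0 := by
    intro v hv
    have hv0 : v ≠ 0 := by rintro rfl; simp [hroots0] at hv
    have hmv : m.IsRoot v := by
      rw [Multiset.count_cons_of_ne hv0] at hv
      exact isRoot_of_mem_roots (Multiset.count_pos.mp (by omega))
    have := (hmv.dvd hPp).eq_zero
    rw [eval_sub, sub_eq_zero] at this
    exact this ▸ hp v hmv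
  obtain ⟨W, hle, hW, hsign⟩ := exists_le_mul_cofactorAt_neg _ hW₀ P hPW₀
  have hcard : P.natDegree ≤ Multiset.card W :=
    calc P.natDegree ≤ Multiset.card m.roots := hsplit.natDegree_eq_card_roots ▸ hPdeg
      _ ≤ Multiset.card W := Multiset.card_le_card ((Multiset.le_cons_self _ _).trans hle)
  obtain ⟨c, hc⟩ := exists_splits_add_C_mul_prod_X_sub_C W hW P hcard hsign
  have hR0 : ((W.map fun ρ => X - C ρ).prod).IsRoot 0 := dvd_iff_isRoot.mp <| Multiset.dvd_prod <|
    Multiset.mem_map_of_mem _ (Multiset.mem_of_le hle (Multiset.mem_cons_self _ _))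
  have hmR : m ∣ (W.map fun ρ => X - C ρ).prod := by
    rw [hsplit.eq_prod_roots_of_monic hm]
    exact Multiset.prod_dvd_prod_of_le
      (Multiset.map_le_map ((Multiset.le_cons_self _ _).trans hle))
  refine ⟨_, hc, by simp [hP0, hR0.eq_zero], ?_⟩
  rw [add_sub_right_comm]
  exact dvd_add hPp (dvd_mul_of_dvd_right hmR _)

lemma Polynomial.Splits.eq_prod_C_mul_X_add_one {K : Type*} [Field K] {Q : K[X]} (hQ : Q.Splits)
    (h0 : Q.eval 0 = 1) : Q = (Q.roots.map fun r => C (-r⁻¹) * X + 1).prod := by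
  have hr : ∀ r ∈ Q.roots, r ≠ 0 := by
    rintro r hr rfl
    simp [(mem_roots'.mp hr).2.eq_zero] at h0
  have hlc : Q.leadingCoeff * (Q.roots.map fun r => -r).prod = 1 := by
    rw [← h0, hQ.eval_eq_prod_roots, Multiset.map_congr rfl fun r _ => zero_sub r]
  have hfac : ∀ r ∈ Q.roots, X - C r = C (-r) * (C (-r⁻¹) * X + 1) := fun r hr' => by
    rw [mul_add, ← mul_assoc, ← C_mul, neg_mul_neg, mul_inv_cancel₀ (hr r hr')]
    simp [sub_eq_add_neg]
  have hC : (Q.roots.map fun r => C (-r)).prod = C (Q.roots.map fun r => -r).prod := by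
    rw [map_multiset_prod, Multiset.map_map]
    rfl
  conv_lhs => rw [hQ.eq_prod_roots, Multiset.map_congr rfl hfac, Multiset.prod_map_mul, hC,
    ← mul_assoc, ← C_mul, hlc, C_1, one_mul]

lemma Multiset.exists_prod_range_C_mul_X_add_one {R : Type*} [CommRing R] (s : Multiset R) :
    ∀ l, Multiset.card s ≤ l → ∃ u : ℕ → R,
      ∏ k ∈ Finset.range l, (C (u k) * X + 1) = (s.map fun a => C a * X + 1).prod := by
  induction s using Multiset.induction_on with
  | empty => exact fun l _ => ⟨0, by simp⟩
  | cons a s ih =>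
    rintro (_ | l) hl
    · simp at hl
    obtain ⟨u, hu⟩ := ih l (by simpa using hl)
    refine ⟨fun k => k.casesOn a u, ?_⟩
    rw [Finset.prod_range_succ', Multiset.map_cons, Multiset.prod_cons, ← hu, mul_comm]
    rfl

lemma prodCtrl_eq_aeval {n : ℕ} (B : Matrix (Fin n) (Fin n) ℝ) (l : ℕ) (u : ℕ → ℝ) :
    prodCtrl B l u = aeval B (∏ k ∈ Finset.range l, (C (u k) * X + 1)) := by
  induction l with
  | zero => simp [prodCtrl]
  | succ l ih =>
    rw [prodCtrl, List.range_succ, List.reverse_append, List.map_append, List.prod_append,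
      ← prodCtrl, ih, Finset.prod_range_succ_comm, map_mul]
    simp [Algebra.smul_def, add_comm]

lemma ctrlMat_mulVec {n : ℕ} (B : Matrix (Fin n) (Fin n) ℝ) (ξ a : Fin n → ℝ) :
    ctrlMat B ξ *ᵥ a = aeval B (∑ j, C (a j) * X ^ (j : ℕ)) *ᵥ ξ := by
  simp only [map_sum, map_mul, aeval_C, aeval_X_pow, ← Algebra.smul_def, sum_mulVec, smul_mulVec]
  ext i
  simp [ctrlMat, mulVec, dotProduct, mul_comm]

lemma exists_aeval_mulVec_eq_of_det_ctrlMat_ne_zero {n : ℕ} {B : Matrix (Fin n) (Fin n) ℝ}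
    {ξ : Fin n → ℝ} (hξ : (ctrlMat B ξ).det ≠ 0) (η : Fin n → ℝ) :
    ∃ p : ℝ[X], aeval B p *ᵥ ξ = η :=
  ⟨∑ j, C (((ctrlMat B ξ)⁻¹ *ᵥ η) j) * X ^ (j : ℕ), by
    rw [← ctrlMat_mulVec, mulVec_mulVec, mul_nonsing_inv _ (isUnit_iff_ne_zero.mpr hξ),
      one_mulVec]⟩

lemma ctrlMat_mulVec_of_commute {n : ℕ} {B M : Matrix (Fin n) (Fin n) ℝ} (h : Commute M B)
    (ξ : Fin n → ℝ) : ctrlMat B (M *ᵥ ξ) = M * ctrlMat B ξ := by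
  ext i j
  rw [ctrlMat, of_apply, mulVec_mulVec, ← (h.pow_right j).eq, ← mulVec_mulVec]
  simp [Matrix.mul_apply, mulVec, dotProduct, ctrlMat]

lemma Matrix.not_isRoot_of_isUnit_aeval {ι K : Type*} [Fintype ι] [DecidableEq ι] [Field K]
    {B : Matrix ι ι K} {p : K[X]} (hp : IsUnit (aeval B p)) {μ : K}
    (hμ : (minpoly K B).IsRoot μ) : ¬ p.IsRoot μ := fun hpμ =>
  (spectrum.zero_notMem_iff K).mpr hp <| hpμ.eq_zero ▸
    spectrum.subset_polynomial_aeval B p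
      ⟨μ, mem_spectrum_of_isRoot_charpoly (hμ.dvd (minpoly_dvd_charpoly B)), rfl⟩

theorem stmt4_general {n : ℕ} (B : Matrix (Fin n) (Fin n) ℝ)
    (hdet : B.det ≠ 0)
    (hsplit : (B.charpoly.map (RingHom.id ℝ)).Splits)
    (hmult : ∀ μ : ℝ, (minpoly ℝ B).rootMultiplicity μ ≤ 2)
    (ξ η : Fin n → ℝ)
    (hξ : (ctrlMat B ξ).det ≠ 0) (hη : (ctrlMat B η).det ≠ 0) :
    steers B ξ η := by
  rw [Polynomial.map_id] at hsplit
  obtain ⟨p, rfl⟩ := exists_aeval_mulVec_eq_of_det_ctrlMat_ne_zero hξ η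
  have hcomm : Commute (aeval B p) B := by simpa using (Commute.all p X).map (aeval B)
  rw [ctrlMat_mulVec_of_commute hcomm, det_mul] at hη
  have hpB : IsUnit (aeval B p) := (isUnit_iff_isUnit_det _).mpr (left_ne_zero_of_mul hη).isUnit
  have hB : IsUnit (aeval B (X : ℝ[X])) := by
    simpa using (isUnit_iff_isUnit_det B).mpr hdet.isUnit
  have hm0 : ¬ (minpoly ℝ B).IsRoot 0 := fun h0 => not_isRoot_of_isUnit_aeval hB h0 (by simp)
  obtain ⟨Q, hQ, hQ0, g, hg⟩ := exists_splits_eval_zero_eq_one_dvd_sub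
    (minpoly.monic (Algebra.IsIntegral.isIntegral B))
    (hsplit.of_dvd B.charpoly_monic.ne_zero (minpoly_dvd_charpoly B)) hm0 hmult p
    (fun μ => not_isRoot_of_isUnit_aeval hpB)
  obtain ⟨u, hu⟩ := (Q.roots.map fun r => -r⁻¹).exists_prod_range_C_mul_X_add_one
    (Multiset.card Q.roots + 1) (by simp)
  refine ⟨Multiset.card Q.roots + 1, Nat.le_add_left _ _, u, ?_⟩
  rw [prodCtrl_eq_aeval, hu, Multiset.map_map, Function.comp_def,
    ← hQ.eq_prod_C_mul_X_add_one hQ0, ← sub_add_cancel Q p, hg, map_add, map_mul, minpoly.aeval,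
    zero_mul, zero_add]

/-- under the near-controllability conditions on `B`, any `ξ` with
`det [ξ, Bξ, …, B^{n-1}ξ] ≠ 0` can be steered to any `η` with
`det [η, Bη, …, B^{n-1}η] ≠ 0`. -/
theorem stmt4 {n : ℕ} (hn : 1 ≤ n) (B : Matrix (Fin n) (Fin n) ℝ)
    (hdet : B.det ≠ 0) (hcyc : minpoly ℝ B = B.charpoly)
    (hsplit : (B.charpoly.map (RingHom.id ℝ)).Splits)
    (hmult : ∀ μ : ℝ, (minpoly ℝ B).rootMultiplicity μ ≤ 2)
    (ξ η : Fin n → ℝ)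
    (hξ : (ctrlMat B ξ).det ≠ 0) (hη : (ctrlMat B η).det ≠ 0) :
    steers B ξ η :=
  stmt4_general B hdet hsplit hmult ξ η hξ hη
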